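/- For every countable set S and every partial order ≤_S on S, there exist families (ℒ_s)_{s∈S} and (𝒦_s)_{s∈S} of sets of languages over the alphabet {1,2} such that for all s,t ∈ S: (1) ML⁺(𝒦_s) ≤_expr ML⁺(𝒦_t) if and only if ML⁺(ℒ_s) ≤_poly ML⁺(ℒ_t) if and only if s ≤_S t; (2) all logics ML⁺(ℒ_s) are equally expressive, and if s ≰_S t then ML⁺(ℒ_s) is exponentially more succinct than ML⁺(ℒ_t). -/

import Mathlib

set_option autoImplicit false
attribute [local instance] Classical.propDecidable

/-- A Kripke model with `n` modalities: a nonempty set of worlds, `n` accessibility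
relations, and a propositional assignment (variables are indexed by `ℕ`). -/
structure KripkeModel (n : ℕ) : Type 1 where
  W : Type
  nonempty : Nonempty W
  R : Fin n → W → W → Prop
  val : ℕ → Set W

/-- A pointed Kripke model. -/
structure PointedModel (n : ℕ) : Type 1 where
  M : KripkeModel n
  w : M.W

/-- Successor selection functions of arity `n`. -/
def SSF (n : ℕ) : Type 1 :=
  (M : KripkeModel n) → M.W → Set M.W

/-- Formulas of the modal logic `ML⁺(𝒪)` for a set `𝒪` of successor selection functions. -/
inductive MLFormula {n : ℕ} (Os : Set (SSF n)) : Type 1 where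
  | var : ℕ → MLFormula Os
  | neg : MLFormula Os → MLFormula Os
  | or : MLFormula Os → MLFormula Os → MLFormula Os
  | box : Os → MLFormula Os → MLFormula Os

/-- Size of a formula: number of nodes of its syntax tree. -/
def MLFormula.size {n : ℕ} {Os : Set (SSF n)} : MLFormula Os → ℕ
  | .var _ => 1
  | .neg φ => φ.size + 1
  | .or φ ψ => φ.size + ψ.size + 1
  | .box _ φ => φ.size + 1

/-- Satisfaction of an `ML⁺(𝒪)` formula in a pointed model. -/
def Satisfies {n : ℕ} {Os : Set (SSF n)} (M : KripkeModel n) : M.W → MLFormula Os → Prop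
  | w, .var p => w ∈ M.val p
  | w, .neg φ => ¬ Satisfies M w φ
  | w, .or φ ψ => Satisfies M w φ ∨ Satisfies M w ψ
  | w, .box O φ => ∀ w' ∈ O.val M w, Satisfies M w' φ

/-- Two formulas (of possibly different logics) are equivalent if they are satisfied
by exactly the same pointed models. -/
def FEquiv {n : ℕ} {Os₁ Os₂ : Set (SSF n)} (φ : MLFormula Os₁) (ψ : MLFormula Os₂) : Prop :=
  ∀ (M : KripkeModel n) (w : M.W), Satisfies M w φ ↔ Satisfies M w ψ

/-- `ML⁺(𝒪₂)` is at least as expressive as `ML⁺(𝒪₁)`. -/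
def LeExpr {n : ℕ} (Os₁ Os₂ : Set (SSF n)) : Prop :=
  ∀ φ : MLFormula Os₁, ∃ ψ : MLFormula Os₂, FEquiv φ ψ

/-- `ML⁺(𝒪₂)` is at least as succinct as `ML⁺(𝒪₁)`: there is a fixed polynomial `p` such
that every `ML⁺(𝒪₁)`-formula has an equivalent `ML⁺(𝒪₂)`-formula of polynomially bounded size. -/
def LePoly {n : ℕ} (Os₁ Os₂ : Set (SSF n)) : Prop :=
  ∃ p : Polynomial ℕ, ∀ φ : MLFormula Os₁, ∃ ψ : MLFormula Os₂,
    FEquiv φ ψ ∧ ψ.size ≤ p.eval φ.size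

def EquallyExpressive {n : ℕ} (Os₁ Os₂ : Set (SSF n)) : Prop :=
  LeExpr Os₁ Os₂ ∧ LeExpr Os₂ Os₁

/-- `ML⁺(𝒪₁)` is exponentially more succinct than `ML⁺(𝒪₂)`: there is a sequence of
`ML⁺(𝒪₁)`-formulas of linearly bounded size and some `c > 1` such that every equivalent
`ML⁺(𝒪₂)`-formula of the `i`-th formula has size at least `c ^ i`. -/
def ExpMoreSuccinct {n : ℕ} (Os₁ Os₂ : Set (SSF n)) : Prop :=
  ∃ (φ : ℕ → MLFormula Os₁) (a b : ℕ) (c : ℝ), 1 < c ∧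
    (∀ i : ℕ, (φ i).size ≤ a * i + b) ∧
    ∀ (i : ℕ) (ψ : MLFormula Os₂), FEquiv (φ i) ψ → c ^ i ≤ ((ψ.size : ℕ) : ℝ)

/-- The successor selection function given by an `n`-ary Boolean function `f`:
it selects the `f`-successors. -/
noncomputable def OfBool {n : ℕ} (f : (Fin n → Bool) → Bool) : SSF n :=
  fun M w => {w' | f (fun j => decide (M.R j w w')) = true}

/-- The set of successor selection functions given by a set of `n`-ary Boolean functions. -/
def boolSSFs {n : ℕ} (F : Set ((Fin n → Bool) → Bool)) : Set (SSF n) :=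
  OfBool '' F

/-- `sSucc M s w w'` : `w'` is an `s`-successor of `w` in `M`. -/
def sSucc {n : ℕ} (M : KripkeModel n) : List (Fin n) → M.W → M.W → Prop
  | [], w, w' => w' = w
  | a :: s, w, w' => ∃ u, M.R a w u ∧ sSucc M s u w'

/-- The successor selection function given by a language `L`: it selects all
`s`-successors for words `s ∈ L`. -/
def OfLang {n : ℕ} (L : Set (List (Fin n))) : SSF n :=
  fun M w => {w' | ∃ s ∈ L, sSucc M s w w'}

/-- The set of successor selection functions given by a set of languages. -/
def langSSFs {n : ℕ} (Ls : Set (Set (List (Fin n)))) : Set (SSF n) :=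
  OfLang '' Ls

/-- The operators of standard multimodal logic `ML_n`: the singleton one-letter languages. -/
def MLn_ops (n : ℕ) : Set (SSF n) := {O | ∃ j : Fin n, O = OfLang {[j]}}

/-- `nestBoxes s φ` is the formula `□_{s₁}□_{s₂}…□_{s_k} φ`. -/
def nestBoxes {n : ℕ} : List (Fin n) → MLFormula (MLn_ops n) → MLFormula (MLn_ops n)
  | [], φ => φ
  | j :: s, φ => .box ⟨OfLang {[j]}, ⟨j, rfl⟩⟩ (nestBoxes s φ)

/-! ### Alternation languages (alphabet {1,2} represented as `Fin 2`, letter `0` ↦ 1, `1` ↦ 2) -/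

/-- The (0-based) `j`-th letter of the alternating word starting with letter `b`. -/
def altLetter (b : Fin 2) (j : ℕ) : Fin 2 := if j % 2 = 0 then b else b + 1

/-- The alternating word of length `ℓ` starting with letter `b`. -/
def altWord (b : Fin 2) (ℓ : ℕ) : List (Fin 2) := (List.range ℓ).map (altLetter b)

/-- The alternation language `A_ℓ` of length `ℓ`. -/
def altLang (ℓ : ℕ) : Set (List (Fin 2)) := {altWord 0 ℓ, altWord 1 ℓ}

/-- Operators of the logic `ML_A(I)`. -/
def MLA_ops (I : Set ℕ) : Set (SSF 2) := (fun ℓ => OfLang (altLang ℓ)) '' I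

/-- Operators of the logic `ML_A⁺(I)` (alternation operators plus the classical boxes). -/
def MLAp_ops (I : Set ℕ) : Set (SSF 2) :=
  MLA_ops I ∪ {OfLang {[(0 : Fin 2)]}, OfLang {[(1 : Fin 2)]}}

/-- The formula `[A_ℓ]^i p` (where `p` is the fixed propositional variable `0`),
as a formula of `ML_A({ℓ})`. -/
def boxAltIter (ℓ : ℕ) : ℕ → MLFormula (MLA_ops {ℓ})
  | 0 => .var 0
  | i + 1 => .box ⟨OfLang (altLang ℓ), ⟨ℓ, rfl, rfl⟩⟩ (boxAltIter ℓ i)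

/-! ### Formula size games -/

/-- The class `{(M,w') | (M,w) ∈ C, w' ∈ O(M,w)}` used in the box move. -/
def boxImage {n : ℕ} (O : SSF n) (C : Set (PointedModel n)) : Set (PointedModel n) :=
  {q | ∃ m ∈ C, ∃ w' ∈ O m.M m.w, q = ⟨m.M, w'⟩}

/-- Closed game trees of the formula size game `FSG(𝒪)`, with root label `⟨C∘D⟩`.
Each constructor corresponds to a legal Spoiler move; leaves are atomic moves. -/
inductive GameTree {n : ℕ} (Os : Set (SSF n)) :
    Set (PointedModel n) → Set (PointedModel n) → Type 1 where
  | atom (p : ℕ) (C D : Set (PointedModel n))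
      (hC : ∀ q ∈ C, q.w ∈ q.M.val p) (hD : ∀ q ∈ D, q.w ∉ q.M.val p) :
      GameTree Os C D
  | not (C D : Set (PointedModel n)) (t : GameTree Os D C) : GameTree Os C D
  | or (C₁ C₂ D : Set (PointedModel n))
      (t₁ : GameTree Os C₁ D) (t₂ : GameTree Os C₂ D) : GameTree Os (C₁ ∪ C₂) D
  | box (O : SSF n) (hO : O ∈ Os) (C D D₁ : Set (PointedModel n))
      (hD : ∀ q ∈ D, ∃ w' ∈ O q.M q.w, (⟨q.M, w'⟩ : PointedModel n) ∈ D₁)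
      (t : GameTree Os (boxImage O C) D₁) : GameTree Os C D

/-- Number of nodes of a game tree. -/
def gameTreeSize {n : ℕ} {Os : Set (SSF n)} :
    ∀ (C D : Set (PointedModel n)), GameTree Os C D → ℕ
  | _, _, .atom _ _ _ _ _ => 1
  | _, _, .not _ _ t => gameTreeSize _ _ t + 1
  | _, _, .or _ _ _ t₁ t₂ => gameTreeSize _ _ t₁ + gameTreeSize _ _ t₂ + 1
  | _, _, .box _ _ _ _ _ _ t => gameTreeSize _ _ t + 1

/-- `IsSubtree t T bl par` : the root of `t` is a node of `T`; `bl` is the sequence of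
successor selection functions labelling box moves on the path from `T`'s root to this node
(excluding the node's own label), and `par = true` iff the path contains an even number
of `¬`-labels. -/
inductive IsSubtree {n : ℕ} {Os : Set (SSF n)} :
    ∀ {C D A B : Set (PointedModel n)},
      GameTree Os C D → GameTree Os A B → List (SSF n) → Bool → Prop where
  | refl {A B : Set (PointedModel n)} (t : GameTree Os A B) : IsSubtree t t [] true
  | not {C D A B : Set (PointedModel n)} {bl : List (SSF n)} {par : Bool}
      {t : GameTree Os C D} {t' : GameTree Os B A} :
      IsSubtree t t' bl par → IsSubtree t (.not A B t') bl (!par)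
  | orLeft {C D A₁ A₂ B : Set (PointedModel n)} {bl : List (SSF n)} {par : Bool}
      {t : GameTree Os C D} {t₁ : GameTree Os A₁ B} (t₂ : GameTree Os A₂ B) :
      IsSubtree t t₁ bl par → IsSubtree t (.or A₁ A₂ B t₁ t₂) bl par
  | orRight {C D A₁ A₂ B : Set (PointedModel n)} {bl : List (SSF n)} {par : Bool}
      {t : GameTree Os C D} (t₁ : GameTree Os A₁ B) {t₂ : GameTree Os A₂ B} :
      IsSubtree t t₂ bl par → IsSubtree t (.or A₁ A₂ B t₁ t₂) bl par
  | box {C D A B D₁ : Set (PointedModel n)} {bl : List (SSF n)} {par : Bool}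
      {t : GameTree Os C D} (O : SSF n) (hO : O ∈ Os)
      (hD : ∀ q ∈ B, ∃ w' ∈ O q.M q.w, (⟨q.M, w'⟩ : PointedModel n) ∈ D₁)
      {t' : GameTree Os (boxImage O A) D₁} :
      IsSubtree t t' bl par → IsSubtree t (.box O hO A B D₁ hD t') (O :: bl) par

/-! ### The canonical game tree `T^ψ` corresponding to a formula `ψ` -/

/-- Positions (nodes) in the syntax tree of a formula. -/
inductive FPos {n : ℕ} {Os : Set (SSF n)} : MLFormula Os → Type 1 where
  | root (φ : MLFormula Os) : FPos φ
  | negChild {φ : MLFormula Os} : FPos φ → FPos (.neg φ)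
  | orLeft {φ ψ : MLFormula Os} : FPos φ → FPos (.or φ ψ)
  | orRight {φ ψ : MLFormula Os} : FPos ψ → FPos (.or φ ψ)
  | boxChild {O : Os} {φ : MLFormula Os} : FPos φ → FPos (.box O φ)

/-- `nodeData φ v C D` computes, for the node `v` of the closed game tree `T^φ(⟨C∘D⟩)`
obtained by playing the Spoiler strategy corresponding to `φ` on the starting node
`⟨C∘D⟩`, the tuple (left label class, right label class, boxlabels, parity of ¬'s). -/
def nodeData {n : ℕ} {Os : Set (SSF n)} :
    (φ : MLFormula Os) → FPos φ →
      Set (PointedModel n) → Set (PointedModel n) →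
      Set (PointedModel n) × Set (PointedModel n) × List (SSF n) × Bool
  | _, .root _, C, D => (C, D, [], true)
  | .neg φ, .negChild q, C, D =>
      let r := nodeData φ q D C
      (r.1, r.2.1, r.2.2.1, !r.2.2.2)
  | .or φ₁ _, .orLeft q, C, D =>
      nodeData φ₁ q {m ∈ C | Satisfies m.M m.w φ₁} D
  | .or _ φ₂, .orRight q, C, D =>
      nodeData φ₂ q {m ∈ C | Satisfies m.M m.w φ₂} D
  | .box O φ, .boxChild q, C, D =>
      let r := nodeData φ q (boxImage O.val C)
        {m ∈ boxImage O.val D | ¬ Satisfies m.M m.w φ}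
      (r.1, r.2.1, O.val :: r.2.2.1, r.2.2.2)

/-- A position is a leaf of the game tree iff the corresponding subformula is a variable. -/
def isLeafPos {n : ℕ} {Os : Set (SSF n)} : (φ : MLFormula Os) → FPos φ → Prop
  | .var _, .root _ => True
  | .neg _, .root _ => False
  | .or _ _, .root _ => False
  | .box _ _, .root _ => False
  | .neg φ, .negChild q => isLeafPos φ q
  | .or φ _, .orLeft q => isLeafPos φ q
  | .or _ ψ, .orRight q => isLeafPos ψ q
  | .box _ φ, .boxChild q => isLeafPos φ q

/-! ### The models `A*_{ℓ,i}` and `B*_{ℓ,s}` -/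

/-- Extend a string `s ∈ {1,2}^i` to an infinite string (only the first `i` letters matter). -/
def extendStr {i : ℕ} (s : Fin i → Fin 2) : ℕ → Fin 2 :=
  fun d => if h : d < i then s ⟨d, h⟩ else 0

/-- The (0-based) `d`-th letter of the concatenation `a_ℓ^{s 0} a_ℓ^{s 1} …`. -/
def bLetter (ℓ : ℕ) (s : ℕ → Fin 2) (d : ℕ) : Fin 2 :=
  altLetter (s (d / ℓ)) (d % ℓ)

/-- The extended model `B*_{ℓ,s}`: a path of length `i·ℓ` spelling `a^ℓ_s`, a trap world
(`none`) with a 1-loop and a 2-loop where `p` (variable 0) is true, and `j`-edges to the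
trap from every base world lacking a `j`-successor. -/
def Bstar (ℓ i : ℕ) (s : ℕ → Fin 2) : KripkeModel 2 where
  W := Option (Fin (i * ℓ + 1))
  nonempty := ⟨none⟩
  R := fun j x y =>
    match x, y with
    | none, none => True
    | none, some _ => False
    | some d, some d' => (d' : ℕ) = (d : ℕ) + 1 ∧ bLetter ℓ s (d : ℕ) = j
    | some d, none => ¬ (((d : ℕ) < i * ℓ) ∧ bLetter ℓ s (d : ℕ) = j)
  val := fun p => {x | p = 0 ∧ x = none}

/-- The root `w₀^B` of `B*_{ℓ,s}`. -/
def rootB (ℓ i : ℕ) (s : ℕ → Fin 2) : (Bstar ℓ i s).W :=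
  some ⟨0, Nat.succ_pos _⟩

/-- Base worlds of `A*_{ℓ,i}`: a depth `d ≤ i·ℓ` together with the branch (which of the
two alternating words the current segment follows); the branch is normalized to `0` at
the main worlds (depths that are multiples of `ℓ`). -/
def AstarBase (ℓ i : ℕ) : Type :=
  {x : ℕ × Fin 2 // x.1 ≤ i * ℓ ∧ (x.1 % ℓ = 0 → x.2 = 0)}

/-- Edges of the base model `A-base_{ℓ,i}` with label `j`. -/
def AbaseEdge (ℓ : ℕ) (j : Fin 2) (x y : ℕ × Fin 2) : Prop :=
  y.1 = x.1 + 1 ∧ ∃ c : Fin 2, j = altLetter c (x.1 % ℓ) ∧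
    (x.1 % ℓ ≠ 0 → c = x.2) ∧ (y.1 % ℓ ≠ 0 → c = y.2)

/-- The extended model `A*_{ℓ,i}`: between consecutive main worlds there are two disjoint
paths spelling `a_ℓ^1` and `a_ℓ^2`; a trap world (`none`) with a 1-loop and a 2-loop where
`p` is false; `j`-edges to the trap from every base world lacking a `j`-successor.
The variable `p` (variable 0) is true exactly at the final main world `w_i`. -/
def Astar (ℓ i : ℕ) : KripkeModel 2 where
  W := Option (AstarBase ℓ i)
  nonempty := ⟨none⟩
  R := fun j x y =>
    match x, y with
    | none, none => True
    | none, some _ => False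
    | some a, some b => AbaseEdge ℓ j a.val b.val
    | some a, none => ¬ ∃ b : AstarBase ℓ i, AbaseEdge ℓ j a.val b.val
  val := fun p => {x | p = 0 ∧ x = some ⟨(i * ℓ, 0), le_refl _, fun _ => rfl⟩}

/-- The root `w₀^A` of `A*_{ℓ,i}`. -/
def rootA (ℓ i : ℕ) : (Astar ℓ i).W :=
  some ⟨(0, 0), Nat.zero_le _, fun _ => rfl⟩

/-- The class `𝔸_{ℓ,i}`. -/
def classA (ℓ i : ℕ) : Set (PointedModel 2) :=
  {⟨Astar ℓ i, rootA ℓ i⟩}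

/-- The class `𝔹_{ℓ,i}`. -/
def classB (ℓ i : ℕ) : Set (PointedModel 2) :=
  {q | ∃ s : Fin i → Fin 2, q = ⟨Bstar ℓ i (extendStr s), rootB ℓ i (extendStr s)⟩}

/-- A node with label classes `C`, `D` covers the string `s` if one of the classes
contains a pointed model `(B*_{ℓ,s}, w)`. -/
def Covers (ℓ i : ℕ) (C D : Set (PointedModel 2)) (s : Fin i → Fin 2) : Prop :=
  ∃ w : (Bstar ℓ i (extendStr s)).W,
    (⟨Bstar ℓ i (extendStr s), w⟩ : PointedModel 2) ∈ C ∪ D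

/-- The word `a^ℓ_s = a_ℓ^{s₁} a_ℓ^{s₂} … a_ℓ^{s_i}`. -/
def aWord (ℓ : ℕ) {i : ℕ} (s : Fin i → Fin 2) : List (Fin 2) :=
  (List.ofFn fun j => altWord (s j) ℓ).flatten

/-- A language is length-uniform if it is nonempty and all its words have the same length. -/
def LengthUniform (L : Set (List (Fin 2))) : Prop :=
  L.Nonempty ∧ ∃ d : ℕ, ∀ x ∈ L, x.length = d

/-- `‖L‖`: the common word length of a length-uniform language. -/
noncomputable def luLen (L : Set (List (Fin 2))) : ℕ :=
  sInf {d : ℕ | ∃ x ∈ L, x.length = d}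

/-- Concatenation of languages. -/
def langConcat (L₁ L₂ : Set (List (Fin 2))) : Set (List (Fin 2)) :=
  {x | ∃ a ∈ L₁, ∃ b ∈ L₂, x = a ++ b}

/-- `L₁ ∘ L₂ ∘ … ∘ L_m` for a list of languages. -/
def concatList (Ls : List (Set (List (Fin 2)))) : Set (List (Fin 2)) :=
  Ls.foldr langConcat {([] : List (Fin 2))}

/-- `𝒪`-bisimulations. -/
def IsOBisim {n : ℕ} (Os : Set (SSF n)) (M₁ M₂ : KripkeModel n)
    (Z : M₁.W → M₂.W → Prop) : Prop :=
  ∀ w₁ w₂, Z w₁ w₂ →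
    (∀ p : ℕ, w₁ ∈ M₁.val p ↔ w₂ ∈ M₂.val p) ∧
    (∀ O ∈ Os, ∀ w₁' ∈ O M₁ w₁, ∃ w₂' ∈ O M₂ w₂, Z w₁' w₂') ∧
    (∀ O ∈ Os, ∀ w₂' ∈ O M₂ w₂, ∃ w₁' ∈ O M₁ w₁, Z w₁' w₂')

/-!
Two path models that spell a word `u` and differ only in whether `p₀` holds at the end of the
path are told apart by `[{u}] p₀`. A formula `ψ` whose operators are single-word boxes `[{v}]`,
`v ∈ U`, can only move along the path in steps given by words of `U`, so by induction on `ψ` it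
tells them apart only if `u` factors into at most `|ψ|` words of `U`.

Fix an injection `f : S → ℕ` and let `A s = f '' Iic s`. The family `𝒦_s` consists of the
languages `{0 1^(n+1) 0}` with `n ∈ A s`; counting zeros shows that such a word factors into words
of this form only trivially. The family `ℒ_s` consists of the unary languages `{0^m}` with `m = 1`
or `m = 2^(⟪n,k⟫²)`, `n ∈ A s`. Each is expressible by iterating `[{0}]`, but if `n ∉ A t`,
every length of `ℒ_t` up to `2^(⟪n,k⟫²)` is at most `2^(⟪n,k⟫² - k)`, so `0^(2^(⟪n,k⟫²))`
needs `2^k` factors and `[{0^(2^(⟪n,k⟫²))}] p₀`, of size `2`, has no equivalent in `ML⁺(ℒ_t)`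
of size below `2^k`.
-/

section

variable {n : ℕ}

theorem LePoly.leExpr {Os₁ Os₂ : Set (SSF n)} (h : LePoly Os₁ Os₂) : LeExpr Os₁ Os₂ :=
  fun φ => let ⟨_, hp⟩ := h; let ⟨ψ, hψ, _⟩ := hp φ; ⟨ψ, hψ⟩

theorem exists_fEquiv_size_eq_of_subset {Os₁ Os₂ : Set (SSF n)} (h : Os₁ ⊆ Os₂)
    (φ : MLFormula Os₁) : ∃ ψ : MLFormula Os₂, FEquiv φ ψ ∧ ψ.size = φ.size := by
  induction φ with
  | var p => exact ⟨.var p, fun _ _ => Iff.rfl, rfl⟩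
  | neg φ ih =>
    obtain ⟨ψ, hψ, hsize⟩ := ih
    exact ⟨.neg ψ, fun M w => (hψ M w).not, by simp [MLFormula.size, hsize]⟩
  | or φ₁ φ₂ ih₁ ih₂ =>
    obtain ⟨ψ₁, hψ₁, hsize₁⟩ := ih₁
    obtain ⟨ψ₂, hψ₂, hsize₂⟩ := ih₂
    exact ⟨.or ψ₁ ψ₂, fun M w => (hψ₁ M w).or (hψ₂ M w), by simp [MLFormula.size, *]⟩
  | box O φ ih =>
    obtain ⟨ψ, hψ, hsize⟩ := ih
    exact ⟨.box ⟨O, h O.2⟩ ψ, fun M w => forall₂_congr fun w' _ => hψ M w',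
      by simp [MLFormula.size, hsize]⟩

theorem lePoly_of_subset {Os₁ Os₂ : Set (SSF n)} (h : Os₁ ⊆ Os₂) : LePoly Os₁ Os₂ :=
  ⟨Polynomial.X, fun φ =>
    let ⟨ψ, hψ, hsize⟩ := exists_fEquiv_size_eq_of_subset h φ
    ⟨ψ, hψ, by rw [hsize, Polynomial.eval_X]⟩⟩

theorem leExpr_of_forall_box {Os₁ Os₂ : Set (SSF n)}
    (h : ∀ O ∈ Os₁, ∀ ψ : MLFormula Os₂, ∃ χ : MLFormula Os₂,
      ∀ (M : KripkeModel n) (w : M.W), Satisfies M w χ ↔ ∀ w' ∈ O M w, Satisfies M w' ψ) :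
    LeExpr Os₁ Os₂ := by
  intro φ
  induction φ with
  | var p => exact ⟨.var p, fun _ _ => Iff.rfl⟩
  | neg φ ih =>
    obtain ⟨ψ, hψ⟩ := ih
    exact ⟨.neg ψ, fun M w => (hψ M w).not⟩
  | or φ₁ φ₂ ih₁ ih₂ =>
    obtain ⟨ψ₁, hψ₁⟩ := ih₁
    obtain ⟨ψ₂, hψ₂⟩ := ih₂
    exact ⟨.or ψ₁ ψ₂, fun M w => (hψ₁ M w).or (hψ₂ M w)⟩
  | box O φ ih =>
    obtain ⟨ψ, hψ⟩ := ih
    obtain ⟨χ, hχ⟩ := h O O.2 ψ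
    exact ⟨χ, fun M w => (forall₂_congr fun w' _ => hψ M w').trans (hχ M w).symm⟩

theorem mem_ofLang_singleton_iff (M : KripkeModel n) (u : List (Fin n)) (w w' : M.W) :
    w' ∈ OfLang {u} M w ↔ sSucc M u w w' := by
  simp [OfLang]

theorem exists_equiv_box_ofLang_singleton {Os : Set (SSF n)} (u : List (Fin n))
    (hu : ∀ a ∈ u, OfLang {[a]} ∈ Os) (ψ : MLFormula Os) :
    ∃ χ : MLFormula Os, ∀ (M : KripkeModel n) (w : M.W),
      Satisfies M w χ ↔ ∀ w' ∈ OfLang {u} M w, Satisfies M w' ψ := by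
  induction u with
  | nil => exact ⟨ψ, fun M w => by simp [mem_ofLang_singleton_iff, sSucc]⟩
  | cons a v ih =>
    obtain ⟨χ, hχ⟩ := ih fun b hb => hu b (List.mem_cons_of_mem a hb)
    refine ⟨.box ⟨OfLang {[a]}, hu a List.mem_cons_self⟩ χ, fun M w => ?_⟩
    simp only [Satisfies, hχ, mem_ofLang_singleton_iff, sSucc, forall_exists_index, and_imp]
    exact ⟨fun h w' x hx hs => h x x hx rfl w' hs,
      fun h x y hy hxy w' hs => h w' y hy (hxy ▸ hs)⟩

def singletonLangs {α : Type} (U : Set (List α)) : Set (Set (List α)) :=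
  (fun u => {u}) '' U

theorem ofLang_mem_langSSFs_singletonLangs {U : Set (List (Fin n))} {u : List (Fin n)}
    (hu : u ∈ U) : OfLang {u} ∈ langSSFs (singletonLangs U) :=
  Set.mem_image_of_mem _ (Set.mem_image_of_mem _ hu)

theorem langSSFs_singletonLangs_mono {U V : Set (List (Fin n))} (h : U ⊆ V) :
    langSSFs (singletonLangs U) ⊆ langSSFs (singletonLangs V) :=
  Set.image_mono (Set.image_mono h)

theorem leExpr_langSSFs_singletonLangs {U : Set (List (Fin n))} {Os : Set (SSF n)}
    (h : ∀ u ∈ U, ∀ a ∈ u, OfLang {[a]} ∈ Os) : LeExpr (langSSFs (singletonLangs U)) Os := by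
  refine leExpr_of_forall_box ?_
  rintro O ⟨_, ⟨u, hu, rfl⟩, rfl⟩
  exact exists_equiv_box_ofLang_singleton u (h u hu)

def wordBox {Os : Set (SSF n)} {u : List (Fin n)} (h : OfLang {u} ∈ Os) : MLFormula Os :=
  .box ⟨OfLang {u}, h⟩ (.var 0)

/-- The path `0 → 1 → ⋯ → wd.length` spelling `wd` (the worlds beyond it are isolated), where
`p₀` holds exactly on `V`. -/
abbrev pathModel (wd : List (Fin n)) (V : Set ℕ) : KripkeModel n where
  W := ℕ
  nonempty := ⟨0⟩
  R := fun a x y => y = x + 1 ∧ wd[x]? = some a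
  val := fun p => {x | p = 0 ∧ x ∈ V}

theorem sSucc_pathModel_iff (wd : List (Fin n)) (V : Set ℕ) (u : List (Fin n)) (j w' : ℕ) :
    sSucc (pathModel wd V) u j w' ↔ u <+: wd.drop j ∧ w' = j + u.length := by
  induction u generalizing j with
  | nil => simp [sSucc]
  | cons a v ih =>
    have hcons : a :: v <+: wd.drop j ↔ wd[j]? = some a ∧ v <+: wd.drop (j + 1) := by
      rcases lt_or_ge j wd.length with hj | hj
      · rw [List.drop_eq_getElem_cons hj, List.cons_prefix_cons, List.getElem?_eq_getElem hj,
          Option.some_inj, eq_comm]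
      · simp [List.drop_eq_nil_of_le hj, List.getElem?_eq_none hj]
    change (∃ x : ℕ, (x = j + 1 ∧ wd[j]? = some a) ∧ sSucc (pathModel wd V) v x w') ↔ _
    simp only [ih, hcons, List.length_cons]
    constructor
    · rintro ⟨_, ⟨rfl, ha⟩, hv, rfl⟩
      exact ⟨⟨ha, hv⟩, by omega⟩
    · rintro ⟨⟨ha, hv⟩, rfl⟩
      exact ⟨j + 1, ⟨rfl, ha⟩, hv, by omega⟩

theorem satisfies_pathModel_iff_of_lt_length {U : Set (List (Fin n))} (wd : List (Fin n))
    (ψ : MLFormula (langSSFs (singletonLangs U))) (j : ℕ)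
    (h : ∀ ps : List (List (Fin n)), (∀ v ∈ ps, v ∈ U) → ps.flatten = wd.drop j →
      ψ.size < ps.length) :
    Satisfies (pathModel wd {wd.length}) j ψ ↔ Satisfies (pathModel wd ∅) j ψ := by
  induction ψ generalizing j with
  | var p =>
    have hj : j ≠ wd.length := by
      rintro rfl
      simpa [MLFormula.size] using h [] (by simp) (by simp)
    change p = 0 ∧ j ∈ ({wd.length} : Set ℕ) ↔ p = 0 ∧ j ∈ (∅ : Set ℕ)
    simp [hj]
  | neg φ ih => exact (ih j fun ps hU hps => Nat.lt_of_succ_lt (h ps hU hps)).not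
  | or φ₁ φ₂ ih₁ ih₂ =>
    have hlt : ∀ ps : List (List (Fin n)), (∀ v ∈ ps, v ∈ U) → ps.flatten = wd.drop j →
        φ₁.size + φ₂.size < ps.length := fun ps hU hps => Nat.lt_of_succ_lt (h ps hU hps)
    exact (ih₁ j fun ps hU hps => (Nat.le_add_right _ _).trans_lt (hlt ps hU hps)).or
      (ih₂ j fun ps hU hps => (Nat.le_add_left _ _).trans_lt (hlt ps hU hps))
  | box O φ ih =>
    obtain ⟨_, ⟨u, hu, rfl⟩, hO⟩ := O.2
    replace hO : OfLang {u} = O.1 := hO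
    have hsucc : ∀ (V : Set ℕ) (w' : ℕ), w' ∈ O.1 (pathModel wd V) j ↔
        u <+: wd.drop j ∧ w' = j + u.length := by
      intro V w'
      rw [← hO, mem_ofLang_singleton_iff, sSucc_pathModel_iff]
    simp only [Satisfies, hsucc, and_imp, forall_eq_apply_imp_iff]
    refine imp_congr_right fun hpre => ih _ fun ps hU hps => ?_
    -- a factorization of the rest of the path extends by `u` to one of `wd.drop j`
    have hu_ps := h (u :: ps) (List.forall_mem_cons.2 ⟨hu, hU⟩) (by
      rw [List.flatten_cons, hps, ← List.drop_drop]
      exact List.prefix_iff_eq_append.1 hpre)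
    simp only [MLFormula.size, List.length_cons] at hu_ps ⊢
    omega

theorem exists_factorization_of_fEquiv_wordBox {Os : Set (SSF n)} {U : Set (List (Fin n))}
    {u : List (Fin n)} (hu : OfLang {u} ∈ Os) (ψ : MLFormula (langSSFs (singletonLangs U)))
    (hψ : FEquiv (wordBox hu) ψ) :
    ∃ ps : List (List (Fin n)), (∀ v ∈ ps, v ∈ U) ∧ ps.flatten = u ∧ ps.length ≤ ψ.size := by
  have hsucc : ∀ (V : Set ℕ) (w' : ℕ), w' ∈ OfLang {u} (pathModel u V) 0 ↔ w' = u.length := by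
    intro V w'
    rw [mem_ofLang_singleton_iff, sSucc_pathModel_iff]
    simp
  have hfull : Satisfies (pathModel u {u.length}) 0 ψ :=
    (hψ _ _).1 fun w' hw' => ⟨rfl, (hsucc _ w').1 hw'⟩
  have hempty : ¬ Satisfies (pathModel u ∅) 0 ψ := fun hsat =>
    ((hψ _ _).2 hsat u.length ((hsucc ∅ _).2 rfl)).2
  by_contra! hlong
  exact hempty ((satisfies_pathModel_iff_of_lt_length u ψ 0
    fun ps hU hps => hlong ps hU (by simpa using hps)).1 hfull)

end

/-- The squared exponent makes `codeLength n k` at least `2 ^ k` times any smaller code length,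
and `Nat.pair` makes the code lengths of distinct `n` distinct. -/
def codeLength (n k : ℕ) : ℕ := 2 ^ (Nat.pair n k ^ 2)

def codeLengths (A : Set ℕ) : Set ℕ := insert 1 {m | ∃ n ∈ A, ∃ k, m = codeLength n k}

def unaryFamily (A : Set ℕ) : Set (Set (List (Fin 2))) :=
  singletonLangs ((List.replicate · 0) '' codeLengths A)

theorem codeLength_mem_codeLengths {A : Set ℕ} {n : ℕ} (hn : n ∈ A) (k : ℕ) :
    codeLength n k ∈ codeLengths A :=
  Set.mem_insert_of_mem _ ⟨n, hn, k, rfl⟩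

theorem codeLengths_mono {A B : Set ℕ} (h : A ⊆ B) : codeLengths A ⊆ codeLengths B :=
  Set.insert_subset_insert fun _ ⟨n, hn, k, hm⟩ => ⟨n, h hn, k, hm⟩

theorem le_two_pow_of_mem_codeLengths {B : Set ℕ} {n : ℕ} (hn : n ∉ B) (k : ℕ) {d : ℕ}
    (hd : d ∈ codeLengths B) (hle : d ≤ codeLength n k) :
    d ≤ 2 ^ (Nat.pair n k ^ 2 - k) := by
  rcases hd with rfl | ⟨m, hm, l, rfl⟩
  · exact Nat.one_le_two_pow
  · have hlt : Nat.pair m l < Nat.pair n k := by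
      have hle' : Nat.pair m l ≤ Nat.pair n k :=
        (Nat.pow_le_pow_iff_left two_ne_zero).1 ((Nat.pow_le_pow_iff_right one_lt_two).1 hle)
      refine hle'.lt_of_ne fun heq => hn ?_
      rwa [← (Nat.pair_eq_pair.1 heq).1]
    have hk : k ≤ Nat.pair n k := Nat.right_le_pair n k
    refine Nat.pow_le_pow_right two_pos (Nat.le_sub_of_add_le ?_)
    nlinarith [Nat.mul_le_mul_right (Nat.pair n k) hlt,
      Nat.mul_le_mul_left (Nat.pair m l) hlt.le]

theorem le_length_of_sum_eq_mul {ds : List ℕ} {c k : ℕ} (hc : 0 < c) (hle : ∀ d ∈ ds, d ≤ c)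
    (hsum : ds.sum = c * k) : k ≤ ds.length := by
  refine Nat.le_of_mul_le_mul_left ?_ hc
  calc c * k = ds.sum := hsum.symm
    _ ≤ ds.length • c := List.sum_le_card_nsmul ds c hle
    _ = c * ds.length := by rw [smul_eq_mul, mul_comm]

theorem two_pow_le_length_of_sum_eq_codeLength {B : Set ℕ} {n : ℕ} (hn : n ∉ B) (k : ℕ)
    {ds : List ℕ} (hds : ∀ d ∈ ds, d ∈ codeLengths B) (hsum : ds.sum = codeLength n k) :
    2 ^ k ≤ ds.length := by
  have hk : k ≤ Nat.pair n k ^ 2 :=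
    (Nat.right_le_pair n k).trans (Nat.le_self_pow two_ne_zero _)
  refine le_length_of_sum_eq_mul (c := 2 ^ (Nat.pair n k ^ 2 - k)) (by positivity)
    (fun d hd => le_two_pow_of_mem_codeLengths hn k (hds d hd) ?_) ?_
  · rw [← hsum]
    exact List.single_le_sum (fun _ _ => Nat.zero_le _) d hd
  · rw [hsum, codeLength, ← pow_add, Nat.sub_add_cancel hk]

theorem leExpr_unaryFamily (A B : Set ℕ) :
    LeExpr (langSSFs (unaryFamily A)) (langSSFs (unaryFamily B)) := by
  refine leExpr_langSSFs_singletonLangs ?_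
  rintro _ ⟨m, -, rfl⟩ a ha
  rw [List.eq_of_mem_replicate ha]
  exact ofLang_mem_langSSFs_singletonLangs ⟨1, Set.mem_insert _ _, rfl⟩

def unaryCodeBox {A : Set ℕ} {n : ℕ} (hn : n ∈ A) (k : ℕ) :
    MLFormula (langSSFs (unaryFamily A)) :=
  wordBox (ofLang_mem_langSSFs_singletonLangs
    (Set.mem_image_of_mem (List.replicate · 0) (codeLength_mem_codeLengths hn k)))

theorem size_unaryCodeBox {A : Set ℕ} {n : ℕ} (hn : n ∈ A) (k : ℕ) :
    (unaryCodeBox hn k).size = 2 := rfl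

theorem two_pow_le_size_of_fEquiv_unaryCodeBox {A B : Set ℕ} {n : ℕ} (hnA : n ∈ A)
    (hnB : n ∉ B) (k : ℕ) (ψ : MLFormula (langSSFs (unaryFamily B)))
    (hψ : FEquiv (unaryCodeBox hnA k) ψ) : 2 ^ k ≤ ψ.size := by
  obtain ⟨ps, hps, hflat, hsize⟩ := exists_factorization_of_fEquiv_wordBox _ ψ hψ
  have hlengths : ∀ d ∈ ps.map List.length, d ∈ codeLengths B := by
    simp only [List.mem_map]
    rintro _ ⟨_, hp, rfl⟩
    obtain ⟨m, hm, rfl⟩ := hps _ hp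
    rwa [List.length_replicate]
  have hsum : (ps.map List.length).sum = codeLength n k := by
    rw [← List.length_flatten, hflat, List.length_replicate]
  calc 2 ^ k ≤ (ps.map List.length).length :=
        two_pow_le_length_of_sum_eq_codeLength hnB k hlengths hsum
    _ = ps.length := List.length_map _
    _ ≤ ψ.size := hsize

theorem lePoly_unaryFamily_iff {A B : Set ℕ} :
    LePoly (langSSFs (unaryFamily A)) (langSSFs (unaryFamily B)) ↔ A ⊆ B := by
  refine ⟨fun ⟨p, hp⟩ => ?_, fun h =>
    lePoly_of_subset (langSSFs_singletonLangs_mono (Set.image_mono (codeLengths_mono h)))⟩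
  by_contra! hAB
  obtain ⟨n, hnA, hnB⟩ := Set.not_subset.1 hAB
  -- a polynomial bound on formulas of size `2` is a constant, but the lower bound is `2 ^ k`
  obtain ⟨ψ, hψ, hsize⟩ := hp (unaryCodeBox hnA (p.eval 2))
  rw [size_unaryCodeBox] at hsize
  exact (Nat.lt_two_pow_self.trans_le
    ((two_pow_le_size_of_fEquiv_unaryCodeBox hnA hnB _ ψ hψ).trans hsize)).false

theorem expMoreSuccinct_unaryFamily {A B : Set ℕ} (h : ¬ A ⊆ B) :
    ExpMoreSuccinct (langSSFs (unaryFamily A)) (langSSFs (unaryFamily B)) := by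
  obtain ⟨n, hnA, hnB⟩ := Set.not_subset.1 h
  refine ⟨unaryCodeBox hnA, 0, 2, 2, one_lt_two,
    fun k => (size_unaryCodeBox hnA k).trans_le (Nat.le_add_left 2 _), fun k ψ hψ => ?_⟩
  exact_mod_cast two_pow_le_size_of_fEquiv_unaryCodeBox hnA hnB k ψ hψ

def markerWord (n : ℕ) : List (Fin 2) := 0 :: (List.replicate (n + 1) 1 ++ [0])

def markerFamily (A : Set ℕ) : Set (Set (List (Fin 2))) := singletonLangs (markerWord '' A)

theorem count_zero_markerWord (n : ℕ) : (markerWord n).count 0 = 2 := by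
  simp [markerWord, List.count_append, List.count_replicate]

theorem markerWord_injective : Function.Injective markerWord := fun m n h => by
  simpa [markerWord] using congrArg List.length h

theorem mem_of_flatten_eq_markerWord {B : Set ℕ} {n : ℕ} {ps : List (List (Fin 2))}
    (hps : ∀ v ∈ ps, v ∈ markerWord '' B) (hflat : ps.flatten = markerWord n) : n ∈ B := by
  -- every factor contains two zeros, and so does the whole word
  have hcounts : ∀ c ∈ ps.map (List.count 0), c = 2 := by
    simp only [List.mem_map]
    rintro _ ⟨v, hv, rfl⟩
    obtain ⟨m, -, rfl⟩ := hps v hv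
    exact count_zero_markerWord m
  have hcount : ps.length * 2 = 2 :=
    calc ps.length * 2 = (ps.map (List.count 0)).sum := by
          rw [List.sum_eq_card_nsmul _ 2 hcounts, List.length_map, smul_eq_mul]
      _ = (markerWord n).count 0 := by rw [← List.count_flatten, hflat]
      _ = 2 := count_zero_markerWord n
  obtain ⟨v, rfl⟩ := List.length_eq_one_iff.1 (by omega : ps.length = 1)
  obtain ⟨m, hm, rfl⟩ := hps v (List.mem_singleton_self _)
  exact markerWord_injective (by simpa using hflat) ▸ hm

theorem leExpr_markerFamily_iff {A B : Set ℕ} :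
    LeExpr (langSSFs (markerFamily A)) (langSSFs (markerFamily B)) ↔ A ⊆ B := by
  refine ⟨fun h n hn => ?_, fun h =>
    (lePoly_of_subset (langSSFs_singletonLangs_mono (Set.image_mono h))).leExpr⟩
  have hmem := ofLang_mem_langSSFs_singletonLangs (Set.mem_image_of_mem markerWord hn)
  obtain ⟨ψ, hψ⟩ := h (wordBox hmem)
  obtain ⟨ps, hps, hflat, -⟩ := exists_factorization_of_fEquiv_wordBox hmem ψ hψ
  exact mem_of_flatten_eq_markerWord hps hflat

theorem exists_subset_iff_le (S : Type) [Countable S] [Preorder S] :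
    ∃ A : S → Set ℕ, ∀ s t, A s ⊆ A t ↔ s ≤ t := by
  obtain ⟨f, hf⟩ := exists_injective_nat S
  exact ⟨fun s => f '' Set.Iic s,
    fun s t => (Set.image_subset_image_iff hf).trans Set.Iic_subset_Iic⟩

/-- the succinctness- and expressiveness relationships between modal logics
defined by sets of languages over the alphabet {1,2} can be as complex as any countable
partial order. -/
theorem statement1 (S : Type) [Countable S] [PartialOrder S] :
    ∃ Lfam Kfam : S → Set (Set (List (Fin 2))),
      (∀ s t : S,
        (LeExpr (langSSFs (Kfam s)) (langSSFs (Kfam t)) ↔ s ≤ t) ∧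
        (LePoly (langSSFs (Lfam s)) (langSSFs (Lfam t)) ↔ s ≤ t)) ∧
      (∀ s t : S, EquallyExpressive (langSSFs (Lfam s)) (langSSFs (Lfam t))) ∧
      (∀ s t : S, ¬ s ≤ t → ExpMoreSuccinct (langSSFs (Lfam s)) (langSSFs (Lfam t))) := by
  obtain ⟨A, hA⟩ := exists_subset_iff_le S
  refine ⟨fun s => unaryFamily (A s), fun s => markerFamily (A s), fun s t => ?_,
    fun s t => ⟨leExpr_unaryFamily _ _, leExpr_unaryFamily _ _⟩,
    fun s t hst => expMoreSuccinct_unaryFamily ((hA s t).not.2 hst)⟩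
  rw [leExpr_markerFamily_iff, lePoly_unaryFamily_iff, hA]
  exact ⟨Iff.rfl, Iff.rfl⟩
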